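/- arXiv:2206.04219 — 2 statements merged into one kernel-verified Lean document; each statement's English description precedes it below -/
import Mathlib

section
/- Any transversal from a corner is a fill matrix: if P ⊆ T_n contains exactly one point from each row of T_n (i.e., for each b ∈ {0,…,n−1}, exactly one point (a,b) with n−1−b ≤ a ≤ n−1), then φ(P) = T_n, so P is in the solitaire orbit of L_n. -/
open Set Relation

/-- Points of the plane lattice. -/
abbrev Pt : Type := ℤ × ℤ

/-- The triangle shape `T = {(0,1),(1,1),(1,0)}`. -/
def Tshape : Set Pt := {(0, 1), (1, 1), (1, 0)}

/-- Translate of a set of points by a vector. -/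
def transl (v : Pt) (S : Set Pt) : Set Pt := (fun p => v + p) '' S

/-- Translate of a finite set of points by a vector. -/
def transF (v : Pt) (S : Finset Pt) : Finset Pt := S.image (fun p => v + p)

/-- A set is filled if every translate of `T` containing at least two of its
points is contained in it. -/
def Filled (F : Set Pt) : Prop :=
  ∀ v : Pt, 2 ≤ (F ∩ transl v Tshape).ncard → transl v Tshape ⊆ F

/-- The fill closure `φ(P)`: smallest filled superset of `P`. -/
def fill (P : Set Pt) : Set Pt := ⋂₀ {F | P ⊆ F ∧ Filled F}

/-- A single triangle solitaire move: if a translate `v + T` contains exactly two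
points of `P`, replace one of them by the third point of `v + T`. -/
def Move (P Q : Finset Pt) : Prop :=
  ∃ v x y : Pt, x ∈ Tshape ∧ y ∈ Tshape ∧ x ≠ y ∧
    v + x ∈ P ∧ v + y ∉ P ∧
    ((P : Set Pt) ∩ transl v Tshape).ncard = 2 ∧
    (Q : Set Pt) = insert (v + y) ((P : Set Pt) \ {v + x})

/-- `Q` is in the solitaire orbit of `P`. -/
def InOrbit (P Q : Finset Pt) : Prop := Relation.ReflTransGen Move P Q

/-- The discrete triangle `T_n = {(a,b) ∈ {0,…,n−1}² : a + b ≥ n − 1}`. -/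
def triangle (n : ℕ) : Set Pt :=
  {p | 0 ≤ p.1 ∧ p.1 < (n : ℤ) ∧ 0 ≤ p.2 ∧ p.2 < (n : ℤ) ∧ (n : ℤ) - 1 ≤ p.1 + p.2}

/-- Neighbourhood of a point: the other points sharing a translate of `T` with it. -/
def nbr (x : Pt) : Set Pt :=
  {y | y ≠ x ∧ ∃ v : Pt, x ∈ transl v Tshape ∧ y ∈ transl v Tshape}

/-- Neighbourhood of a set. -/
def nbrSet (A : Set Pt) : Set Pt := ⋃ a ∈ A, nbr a

/-- Two sets touch if one meets the neighbourhood of the other. -/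
def Touch (A B : Set Pt) : Prop := (A ∩ nbrSet B).Nonempty ∨ (B ∩ nbrSet A).Nonempty

/-- `(r, k, v)` is a decomposition of `φ(P)` into pairwise non-touching
translated triangles `vᵢ + T_{kᵢ}`. -/
def IsDecomp (P : Finset Pt) (r : ℕ) (k : Fin r → ℕ) (v : Fin r → Pt) : Prop :=
  (fill (P : Set Pt) = ⋃ i, transl (v i) (triangle (k i))) ∧
  (∀ i, 1 ≤ k i) ∧
  (∀ i j, i ≠ j → ¬ Touch (transl (v i) (triangle (k i))) (transl (v j) (triangle (k j))))

/-- The horizontal line `L_n = {(a, n−1) : 0 ≤ a ≤ n−1}` (top edge of `T_n`). -/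
def lineF (n : ℕ) : Finset Pt :=
  (Finset.range n).image (fun a : ℕ => (((a : ℤ), (n : ℤ) - 1) : Pt))

/-- The vertical edge `{(n−1, b) : 0 ≤ b ≤ n−1}` of `T_n`. -/
def vlineF (n : ℕ) : Finset Pt :=
  (Finset.range n).image (fun b : ℕ => ((((n : ℤ) - 1), (b : ℤ)) : Pt))

/-- The diagonal edge `{(a, n−1−a) : 0 ≤ a ≤ n−1}` of `T_n`. -/
def dlineF (n : ℕ) : Finset Pt :=
  (Finset.range n).image (fun a : ℕ => (((a : ℤ), (n : ℤ) - 1 - (a : ℤ)) : Pt))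

/-- The points of `T_n` below the top line, listed row `n−2` down to row `0`,
each row from right to left. -/
def belowPts (n : ℕ) : List Pt :=
  (List.range (n - 1)).flatMap (fun i =>
    (List.range (n - 1 - i)).map (fun t =>
      (((n : ℤ) - 1 - (t : ℤ), (n : ℤ) - 2 - (i : ℤ)) : Pt)))

/-- The canonical pattern `P_{n,k}`: the line `L_n` together with the first `k`
points of `T_n \ L_n` in the order: row `n−2` right to left, then row `n−3`, etc. -/
def PnkF (n k : ℕ) : Finset Pt := lineF n ∪ ((belowPts n).take k).toFinset

/-- A TEP family on the triangle shape, with cells ordered `(0,1), (1,1), (1,0)`: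
any two of the three symbols determine the third uniquely. -/
def IsTEP {A : Type} (R : Set (A × A × A)) : Prop :=
  (∀ a b : A, ∃! c : A, (a, b, c) ∈ R) ∧
  (∀ a c : A, ∃! b : A, (a, b, c) ∈ R) ∧
  (∀ b c : A, ∃! a : A, (a, b, c) ∈ R)

/-- A colouring is valid on `T_n` if every translate of `T` inside `T_n`
carries a pattern of `R`. -/
def ValidOn {A : Type} (R : Set (A × A × A)) (n : ℕ) (x : Pt → A) : Prop :=
  ∀ v : Pt, transl v Tshape ⊆ triangle n →
    (x (v + (0, 1)), x (v + (1, 1)), x (v + (1, 0))) ∈ R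

/-- One completion step: a translate of `T` inside `T_n` has exactly two
coloured cells; colour the third using the TEP rule `R`. States are pairs
(set of coloured cells, colouring). -/
def TStep {A : Type} (R : Set (A × A × A)) (n : ℕ)
    (s t : Set Pt × (Pt → A)) : Prop :=
  ∃ v : Pt, transl v Tshape ⊆ triangle n ∧
    ∃ c ∈ transl v Tshape, c ∉ s.1 ∧ transl v Tshape \ {c} ⊆ s.1 ∧
      t.1 = insert c s.1 ∧ (∀ p : Pt, p ≠ c → t.2 p = s.2 p) ∧
      (t.2 (v + (0, 1)), t.2 (v + (1, 1)), t.2 (v + (1, 0))) ∈ R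

/-- `P ⊆ T_n` is a basis: for every colouring of `P`, every maximal run of the
iterative completion process covers `T_n` and produces a valid pattern. -/
def IsBasis {A : Type} (R : Set (A × A × A)) (n : ℕ) (P : Finset Pt) : Prop :=
  (P : Set Pt) ⊆ triangle n ∧
  ∀ q : Pt → A, ∀ s : Set Pt × (Pt → A),
    Relation.ReflTransGen (TStep R n) ((P : Set Pt), q) s →
    (∀ t, ¬ TStep R n s t) →
    triangle n ⊆ s.1 ∧ ValidOn R n s.2

/-! Filling proceeds row by row from the corner `(n−1, 0)`: once row `b` of `T_n` is filled, the
point of `P` in row `b+1` spreads along that row in both directions, each new point completing a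
translate of `T` whose bottom cell lies in row `b`.
For the orbit, the line `L_n` is pushed down one row at a time: the row-`b` segment is moved into
row `b−1` one point at a time, from its right end straight down and from its left end diagonally,
until only the point of `P` in row `b` is left behind. After the last row the position is `P`. -/

lemma mem_transl_Tshape {a b x y : ℤ} :
    ((a, b) : Pt) ∈ transl (x, y) Tshape ↔
      (a = x ∧ b = y + 1) ∨ (a = x + 1 ∧ b = y + 1) ∨ (a = x + 1 ∧ b = y) := by
  simp only [transl, Tshape, Set.image_insert_eq, Set.image_singleton, Set.mem_insert_iff,
    Set.mem_singleton_iff, Prod.mk_add_mk, Prod.mk.injEq, add_zero]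

lemma finite_transl_Tshape (v : Pt) : (transl v Tshape).Finite :=
  ((Set.finite_singleton _).insert _ |>.insert _).image _

section Fill

lemma fill_subset_of_filled {P F : Set Pt} (hPF : P ⊆ F) (hF : Filled F) : fill P ⊆ F :=
  Set.sInter_subset_of_mem ⟨hPF, hF⟩

lemma Filled.mem_of_mem_of_mem {F : Set Pt} (hF : Filled F) {v p q r : Pt}
    (hpv : p ∈ transl v Tshape) (hqv : q ∈ transl v Tshape) (hrv : r ∈ transl v Tshape)
    (hp : p ∈ F) (hq : q ∈ F) (hpq : p ≠ q) : r ∈ F := by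
  refine hF v ?_ hrv
  calc 2 = ({p, q} : Set Pt).ncard := (Set.ncard_pair hpq).symm
    _ ≤ (F ∩ transl v Tshape).ncard :=
      Set.ncard_le_ncard (Set.insert_subset ⟨hp, hpv⟩ (Set.singleton_subset_iff.2 ⟨hq, hqv⟩))
        ((finite_transl_Tshape v).inter_of_right F)

lemma filled_triangle (n : ℕ) : Filled (triangle n) := by
  rintro ⟨x, y⟩ h2 ⟨a, b⟩ hr
  obtain ⟨⟨c, d⟩, ⟨e, f⟩, ⟨hp, hpv⟩, ⟨hq, hqv⟩, hpq⟩ :=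
    (Set.one_lt_ncard_iff ((finite_transl_Tshape _).inter_of_right _)).1 h2
  simp only [mem_transl_Tshape, triangle, Set.mem_ofPred_eq, ne_eq, Prod.mk.injEq] at *
  omega

variable {F : Set Pt} {lo hi a₀ b : ℤ}

lemma Filled.mem_row_succ_of_le (hF : Filled F)
    (hrow : ∀ a, lo ≤ a → a ≤ hi → ((a, b) : Pt) ∈ F) (ha₀ : ((a₀, b + 1) : Pt) ∈ F)
    (hhi : a₀ ≤ hi) : ∀ a, lo - 1 ≤ a → a ≤ a₀ → ((a, b + 1) : Pt) ∈ F := by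
  refine fun a ha h => Int.leInductionDown (m := a₀)
    (motive := fun a _ => lo - 1 ≤ a → ((a, b + 1) : Pt) ∈ F) (fun _ => ha₀) ?_ a h ha
  intro c hc ih hc'
  exact hF.mem_of_mem_of_mem (v := (c - 1, b)) (p := (c, b + 1)) (q := (c, b))
    (by simp [mem_transl_Tshape]) (by simp [mem_transl_Tshape]) (by simp [mem_transl_Tshape])
    (ih (by omega)) (hrow c (by omega) (by omega)) (by simp)

lemma Filled.mem_row_succ_of_ge (hF : Filled F)
    (hrow : ∀ a, lo ≤ a → a ≤ hi → ((a, b) : Pt) ∈ F) (ha₀ : ((a₀, b + 1) : Pt) ∈ F)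
    (hlo : lo - 1 ≤ a₀) : ∀ a, a₀ ≤ a → a ≤ hi → ((a, b + 1) : Pt) ∈ F := by
  refine fun a h ha => Int.leInduction (m := a₀)
    (motive := fun a _ => a ≤ hi → ((a, b + 1) : Pt) ∈ F) (fun _ => ha₀) ?_ a h ha
  intro c hc ih hc'
  exact hF.mem_of_mem_of_mem (v := (c, b)) (p := (c, b + 1)) (q := (c + 1, b))
    (by simp [mem_transl_Tshape]) (by simp [mem_transl_Tshape]) (by simp [mem_transl_Tshape])
    (ih (by omega)) (hrow (c + 1) (by omega) (by omega)) (by simp)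

lemma Filled.mem_row_succ (hF : Filled F)
    (hrow : ∀ a, lo ≤ a → a ≤ hi → ((a, b) : Pt) ∈ F) (ha₀ : ((a₀, b + 1) : Pt) ∈ F)
    (hlo : lo - 1 ≤ a₀) (hhi : a₀ ≤ hi) : ∀ a, lo - 1 ≤ a → a ≤ hi → ((a, b + 1) : Pt) ∈ F :=
  fun a h₁ h₂ => (le_total a a₀).elim (hF.mem_row_succ_of_le hrow ha₀ hhi a h₁)
    (fun h => hF.mem_row_succ_of_ge hrow ha₀ hlo a h h₂)

end Fill

lemma triangle_subset_of_filled {n : ℕ} {P F : Set Pt} (hF : Filled F) (hPF : P ⊆ F)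
    (hP : P ⊆ triangle n) (hrow : ∀ b : ℤ, 0 ≤ b → b < (n : ℤ) → ∃ a : ℤ, ((a, b) : Pt) ∈ P) :
    triangle n ⊆ F := by
  have rows : ∀ b : ℤ, -1 ≤ b → b < n → ∀ a, n - 1 - b ≤ a → a ≤ n - 1 → ((a, b) : Pt) ∈ F := by
    refine fun b hb => Int.leInduction (m := -1) (fun _ _ _ _ => by omega) ?_ b hb
    intro b hb ih hbn
    obtain ⟨a₀, ha₀⟩ := hrow (b + 1) (by omega) hbn
    have := hP ha₀
    simp only [triangle, Set.mem_ofPred_eq] at this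
    simpa only [show (n : ℤ) - 1 - (b + 1) = n - 1 - b - 1 by ring] using
      hF.mem_row_succ (ih (by omega)) (hPF ha₀) (by omega) (by omega)
  rintro ⟨a, b⟩ ⟨-, han, hb₀, hbn, hab⟩
  exact rows b (by omega) hbn a (by omega) (by omega)

lemma fill_eq_triangle {n : ℕ} {P : Set Pt} (hP : P ⊆ triangle n)
    (hrow : ∀ b : ℤ, 0 ≤ b → b < (n : ℤ) → ∃ a : ℤ, ((a, b) : Pt) ∈ P) :
    fill P = triangle n :=
  (fill_subset_of_filled hP (filled_triangle n)).antisymm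
    (Set.subset_sInter fun _ ⟨hPF, hF⟩ => triangle_subset_of_filled hF hPF hP hrow)

section Orbit

lemma move_of_transl_eq {Q : Finset Pt} {v p q r : Pt} (hv : transl v Tshape = {p, q, r})
    (hpq : p ≠ q) (hpr : p ≠ r) (hp : p ∈ Q) (hq : q ∈ Q) (hr : r ∉ Q) :
    Move Q (insert r (Q.erase p)) := by
  have hpv : p ∈ transl v Tshape := hv ▸ Set.mem_insert p _
  have hrv : r ∈ transl v Tshape := by simp [hv]
  obtain ⟨x, hx, rfl⟩ := hpv
  obtain ⟨y, hy, rfl⟩ := hrv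
  have hQv : (Q : Set Pt) ∩ transl v Tshape = {v + x, q} := by
    ext z
    simp only [hv, Set.mem_inter_iff, Finset.mem_coe, Set.mem_insert_iff, Set.mem_singleton_iff]
    constructor
    · rintro ⟨hz, rfl | rfl | rfl⟩ <;> simp_all
    · rintro (rfl | rfl) <;> simp_all
  refine ⟨v, x, y, hx, hy, fun h => hpr (h ▸ rfl), hp, hr, ?_, ?_⟩
  · rw [hQv, Set.ncard_pair hpq]
  · rw [Finset.coe_insert, Finset.coe_erase]

/-- A position midway through pushing `[p, q] × {b}` down to `[p + 1, q] × {b − 1}` above the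
points `U`: the part `[lo, hi]` of row `b` has not moved yet. -/
noncomputable def slideState (U : Finset Pt) (b p q lo hi : ℤ) : Finset Pt :=
  U ∪ Finset.Icc lo hi ×ˢ {b} ∪ (Finset.Icc (p + 1) lo ∪ Finset.Icc (hi + 1) q) ×ˢ {b - 1}

variable {U : Finset Pt} {b p q lo hi : ℤ}

lemma mem_slideState {x y : ℤ} : ((x, y) : Pt) ∈ slideState U b p q lo hi ↔
    (x, y) ∈ U ∨ (lo ≤ x ∧ x ≤ hi ∧ y = b) ∨
      ((p + 1 ≤ x ∧ x ≤ lo ∨ hi + 1 ≤ x ∧ x ≤ q) ∧ y = b - 1) := by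
  simp [slideState, and_assoc, eq_comm (a := b), eq_comm (a := b - 1)]

lemma move_slideState_hi (hU : ∀ z ∈ U, b < z.2) (hlohi : lo < hi) (hq : hi ≤ q) :
    Move (slideState U b p q lo hi) (slideState U b p q lo (hi - 1)) := by
  have hUb : ∀ x, ((x, b) : Pt) ∉ U := fun x h => (hU _ h).false
  have hUb' : ∀ x, ((x, b - 1) : Pt) ∉ U := fun x h => by linarith [hU _ h]
  convert move_of_transl_eq (v := (hi - 1, b - 1)) (p := (hi, b)) (q := (hi - 1, b))
    (r := (hi, b - 1)) ?_ (by simp only [ne_eq, Prod.mk.injEq]; omega)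
    (by simp only [ne_eq, Prod.mk.injEq]; omega) ?_ ?_ ?_ using 1
  · ext ⟨x, y⟩
    by_cases hxy : ((x, y) : Pt) ∈ U
    · have : b < y := hU _ hxy
      simp [mem_slideState, hxy]; omega
    · simp [mem_slideState, hxy]; omega
  · ext ⟨x, y⟩
    simp only [mem_transl_Tshape, Set.mem_insert_iff, Set.mem_singleton_iff, Prod.mk.injEq]
    omega
  all_goals simp [mem_slideState, hUb, hUb']; omega

lemma move_slideState_lo (hU : ∀ z ∈ U, b < z.2) (hlohi : lo < hi) (hp : p ≤ lo) :
    Move (slideState U b p q lo hi) (slideState U b p q (lo + 1) hi) := by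
  have hUb : ∀ x, ((x, b) : Pt) ∉ U := fun x h => (hU _ h).false
  have hUb' : ∀ x, ((x, b - 1) : Pt) ∉ U := fun x h => by linarith [hU _ h]
  convert move_of_transl_eq (v := (lo, b - 1)) (p := (lo, b)) (q := (lo + 1, b))
    (r := (lo + 1, b - 1)) ?_ (by simp only [ne_eq, Prod.mk.injEq]; omega)
    (by simp only [ne_eq, Prod.mk.injEq]; omega) ?_ ?_ ?_ using 1
  · ext ⟨x, y⟩
    by_cases hxy : ((x, y) : Pt) ∈ U
    · have : b < y := hU _ hxy
      simp [mem_slideState, hxy]; omega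
    · simp [mem_slideState, hxy]; omega
  · ext ⟨x, y⟩
    simp only [mem_transl_Tshape, Set.mem_insert_iff, Set.mem_singleton_iff, Prod.mk.injEq]
    omega
  all_goals simp [mem_slideState, hUb, hUb']; omega

lemma slideState_reaches (hU : ∀ z ∈ U, b < z.2) {a : ℤ} (hp : p ≤ lo) (hloa : lo ≤ a)
    (hahi : a ≤ hi) (hq : hi ≤ q) :
    ReflTransGen Move (slideState U b p q lo hi) (slideState U b p q a a) := by
  have shrink_hi : ReflTransGen Move (slideState U b p q lo hi) (slideState U b p q lo a) := by
    refine Int.leInduction (m := a) (motive := fun hi _ => hi ≤ q →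
      ReflTransGen Move (slideState U b p q lo hi) (slideState U b p q lo a)) (fun _ => .refl)
      ?_ hi hahi hq
    intro c hc ih hcq
    exact .head (by simpa using move_slideState_hi hU (by omega) hcq) (ih (by omega))
  have raise_lo : ReflTransGen Move (slideState U b p q lo a) (slideState U b p q a a) := by
    refine Int.leInductionDown (m := a) (motive := fun lo _ => p ≤ lo →
      ReflTransGen Move (slideState U b p q lo a) (slideState U b p q a a)) (fun _ => .refl)
      ?_ lo hloa hp
    intro c hc ih hpc
    exact .head (by simpa using move_slideState_lo hU (by omega) hpc) (ih (by omega))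
  exact shrink_hi.trans raise_lo

/-- The line `L_n` pushed down to row `b`, on top of the points of `P` above row `b`. -/
noncomputable def rowState (P : Finset Pt) (n : ℕ) (b : ℤ) : Finset Pt :=
  P.filter (fun z => b < z.2) ∪ Finset.Icc ((n : ℤ) - 1 - b) (n - 1) ×ˢ {b}

lemma rowState_eq_slideState (P : Finset Pt) (n : ℕ) (b : ℤ) :
    rowState P n b = slideState (P.filter (fun z => b < z.2)) b (n - 1 - b) (n - 1)
      (n - 1 - b) (n - 1) := by
  ext ⟨x, y⟩
  simp only [rowState, Finset.mem_union, Finset.mem_product, Finset.mem_Icc,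
    Finset.mem_singleton, mem_slideState]
  by_cases hxy : ((x, y) : Pt) ∈ P.filter (fun z => b < z.2) <;> simp only [hxy, true_or, false_or]
  omega

lemma slideState_self_eq_rowState {P : Finset Pt} {n : ℕ} {a₀ b : ℤ} (ha₀ : ((a₀, b) : Pt) ∈ P)
    (hrow : ∀ a, ((a, b) : Pt) ∈ P → a = a₀) (hlo : (n : ℤ) - 1 - b ≤ a₀) (hhi : a₀ ≤ n - 1) :
    slideState (P.filter (fun z => b < z.2)) b (n - 1 - b) (n - 1) a₀ a₀ = rowState P n (b - 1) := by
  ext ⟨x, y⟩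
  simp only [rowState, Finset.mem_union, Finset.mem_filter, Finset.mem_product, Finset.mem_Icc,
    Finset.mem_singleton, mem_slideState]
  by_cases hxy : ((x, y) : Pt) ∈ P
  · have : y = b → x = a₀ := fun h => hrow x (h ▸ hxy)
    simp only [hxy, true_and]
    omega
  · have : ¬(x = a₀ ∧ y = b) := fun ⟨hx, hy⟩ => hxy (hx ▸ hy ▸ ha₀)
    simp only [hxy, false_and, false_or]
    omega

variable {n : ℕ} {P : Finset Pt}

lemma rowState_reaches_sub_one (hP : (P : Set Pt) ⊆ triangle n)
    (hrow : ∀ b : ℤ, 0 ≤ b → b < (n : ℤ) → ∃! a : ℤ, ((a, b) : Pt) ∈ P) {b : ℤ} (hb₀ : 0 ≤ b)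
    (hbn : b < n) : ReflTransGen Move (rowState P n b) (rowState P n (b - 1)) := by
  obtain ⟨a₀, ha₀, huniq⟩ := hrow b hb₀ hbn
  have := hP ha₀
  simp only [triangle, Set.mem_ofPred_eq] at this
  rw [rowState_eq_slideState, ← slideState_self_eq_rowState ha₀ huniq (by omega) (by omega)]
  exact slideState_reaches (fun z hz => (Finset.mem_filter.1 hz).2) le_rfl (by omega) (by omega)
    le_rfl

lemma rowState_top (hP : (P : Set Pt) ⊆ triangle n) : rowState P n (n - 1) = lineF n := by
  ext ⟨x, y⟩
  have hxy : ((x, y) : Pt) ∈ P → y < n := fun h => (hP h).2.2.2.1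
  simp only [rowState, lineF, Finset.mem_union, Finset.mem_filter, Finset.mem_product,
    Finset.mem_Icc, Finset.mem_singleton, Finset.mem_image, Finset.mem_range, Prod.mk.injEq]
  constructor
  · rintro (⟨h, hy⟩ | ⟨⟨hx₀, hxn⟩, rfl⟩)
    · exact absurd (hxy h) (by omega)
    · exact ⟨x.toNat, by omega, by omega, rfl⟩
  · rintro ⟨a, ha, rfl, rfl⟩
    exact .inr ⟨⟨by omega, by omega⟩, rfl⟩

lemma rowState_neg_one (hP : (P : Set Pt) ⊆ triangle n) : rowState P n (-1) = P := by
  ext ⟨x, y⟩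
  have hxy : ((x, y) : Pt) ∈ P → 0 ≤ y := fun h => (hP h).2.2.1
  simp only [rowState, Finset.mem_union, Finset.mem_filter, Finset.mem_product, Finset.mem_Icc,
    Finset.mem_singleton]
  constructor
  · rintro (⟨h, -⟩ | ⟨⟨hx₀, hxn⟩, rfl⟩)
    · exact h
    · omega
  · exact fun h => .inl ⟨h, by linarith [hxy h]⟩

theorem inOrbit_lineF (hP : (P : Set Pt) ⊆ triangle n)
    (hrow : ∀ b : ℤ, 0 ≤ b → b < (n : ℤ) → ∃! a : ℤ, ((a, b) : Pt) ∈ P) :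
    InOrbit (lineF n) P := by
  have descend : ∀ b : ℤ, b ≤ n - 1 → -1 ≤ b → ReflTransGen Move (rowState P n (n - 1))
      (rowState P n b) := by
    refine fun b hb => Int.leInductionDown (fun _ => .refl) ?_ b hb
    intro c hc ih hc'
    exact (ih (by omega)).trans (rowState_reaches_sub_one hP hrow (by omega) (by omega))
  simpa only [InOrbit, rowState_top hP, rowState_neg_one hP] using descend (-1) (by omega) le_rfl

end Orbit

theorem row_transversal_fills_general (n : ℕ) (P : Finset Pt)
    (hP : (P : Set Pt) ⊆ triangle n)
    (hrow : ∀ b : ℤ, 0 ≤ b → b < (n : ℤ) → ∃! a : ℤ, ((a, b) : Pt) ∈ P) :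
    fill (P : Set Pt) = triangle n ∧ InOrbit (lineF n) P :=
  ⟨fill_eq_triangle hP fun b hb₀ hbn => (hrow b hb₀ hbn).exists, inOrbit_lineF hP hrow⟩

/-- a transversal of the rows of `T_n` fills, hence lies in the
orbit of `L_n`. -/
theorem row_transversal_fills (n : ℕ) (hn : 1 ≤ n) (P : Finset Pt)
    (hP : (P : Set Pt) ⊆ triangle n)
    (hrow : ∀ b : ℤ, 0 ≤ b → b < (n : ℤ) → ∃! a : ℤ, ((a, b) : Pt) ∈ P) :
    fill (P : Set Pt) = triangle n ∧ InOrbit (lineF n) P :=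
  row_transversal_fills_general n P hP hrow
end

section
/- Being a basis is preserved by solitaire moves: let R ⊆ Σ^T be a TEP family and suppose pattern Q is obtained from pattern P ⊆ T_n by a single triangle solitaire move with Q ⊆ T_n. If P is a basis for the restriction of X_R to T_n, then so is Q; moreover there is a natural bijection Σ^P → Σ^Q such that corresponding colourings have the same unique valid completion to T_n. -/
/-! A move exchanges a point `α` of `P` for the third point `β` of a translate
`τ = v + T` with `τ \ {β} ⊆ P`. Completion recovers `α` from `τ \ {α} ⊆ Q`, so the
completion closure of `Q` still covers `T_n`; and any colouring of `Q` extends to a valid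
one, by first colouring `α` with the TEP rule on `τ` and then completing from the basis `P`.
Since completion is forced, valid colourings are determined by their restrictions to any
basis, and restricting the completion of a colouring of `P` to `Q` is the required
bijection. -/

open Set Relation

open Function

section

variable {A : Type} {R : Set (A × A × A)} {n : ℕ}

lemma transl_Tshape (v : Pt) :
    transl v Tshape = {v + (0, 1), v + (1, 1), v + (1, 0)} := by
  simp [transl, Tshape, Set.image_insert_eq]

lemma ncard_transl_Tshape (v : Pt) : (transl v Tshape).ncard = 3 :=
  Set.ncard_eq_three.2 ⟨_, _, _, by simp, by simp, by simp, transl_Tshape v⟩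

def LocallyValid (R : Set (A × A × A)) (v : Pt) (x : Pt → A) : Prop :=
  (x (v + (0, 1)), x (v + (1, 1)), x (v + (1, 0))) ∈ R

namespace IsTEP

lemma apply_eq_of_eqOn (hR : IsTEP R) {v c : Pt} {x y : Pt → A}
    (hx : LocallyValid R v x) (hy : LocallyValid R v y) (hc : c ∈ transl v Tshape)
    (h : EqOn x y (transl v Tshape \ {c})) : x c = y c := by
  rw [transl_Tshape] at hc h
  rcases hc with rfl | rfl | rfl
  · exact (hR.2.2 _ _).unique hx (by rwa [h (by simp), h (by simp)])
  · exact (hR.2.1 _ _).unique hx (by rwa [h (by simp), h (by simp)])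
  · exact (hR.1 _ _).unique hx (by rwa [h (by simp), h (by simp)])

lemma exists_update (hR : IsTEP R) {v c : Pt} (x : Pt → A) (hc : c ∈ transl v Tshape) :
    ∃ γ, LocallyValid R v (update x c γ) := by
  rw [transl_Tshape] at hc
  rcases hc with rfl | rfl | rfl
  · obtain ⟨γ, hγ, -⟩ := hR.2.2 (x (v + (1, 1))) (x (v + (1, 0)))
    exact ⟨γ, by simpa [LocallyValid, update_apply] using hγ⟩
  · obtain ⟨γ, hγ, -⟩ := hR.2.1 (x (v + (0, 1))) (x (v + (1, 0)))
    exact ⟨γ, by simpa [LocallyValid, update_apply] using hγ⟩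
  · obtain ⟨γ, hγ, -⟩ := hR.1 (x (v + (0, 1))) (x (v + (1, 1)))
    exact ⟨γ, by simpa [LocallyValid, update_apply] using hγ⟩

end IsTEP

def FilledIn (n : ℕ) (F : Set Pt) : Prop :=
  ∀ ⦃v c : Pt⦄, transl v Tshape ⊆ triangle n → c ∈ transl v Tshape →
    transl v Tshape \ {c} ⊆ F → c ∈ F

/-- The completion closure of `P` inside `T_n` is all of `T_n`. -/
def Spans (n : ℕ) (P : Set Pt) : Prop :=
  ∀ F : Set Pt, FilledIn n F → P ⊆ F → triangle n ⊆ F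

lemma triangle_finite (n : ℕ) : (triangle n).Finite :=
  ((Set.finite_Icc (0 : ℤ) n).prod (Set.finite_Icc (0 : ℤ) n)).subset
    fun _ ⟨h₀, h₁, h₂, h₃, _⟩ => ⟨⟨h₀, h₁.le⟩, ⟨h₂, h₃.le⟩⟩

section Completion

variable {s t : Set Pt × (Pt → A)}

lemma TStep.ncard_sdiff_lt (h : TStep R n s t) :
    (triangle n \ t.1).ncard < (triangle n \ s.1).ncard := by
  obtain ⟨v, hv, c, hcT, hcs, -, ht, -⟩ := h
  rw [ht, ← Set.union_singleton, ← Set.sdiff_sdiff]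
  exact Set.ncard_sdiff_singleton_lt_of_mem ⟨hv hcT, hcs⟩ (triangle_finite n).sdiff

variable (R n) in
lemma exists_maximal_run (s : Set Pt × (Pt → A)) :
    ∃ t, ReflTransGen (TStep R n) s t ∧ ∀ u, ¬ TStep R n t u := by
  obtain ⟨t, hst, hmin⟩ :=
    (measure fun t : Set Pt × (Pt → A) => (triangle n \ t.1).ncard).wf.has_min
      {t | ReflTransGen (TStep R n) s t} ⟨s, .refl⟩
  exact ⟨t, hst, fun u hu => hmin u (hst.tail hu) hu.ncard_sdiff_lt⟩

lemma filledIn_of_maximal (hR : IsTEP R) (hmax : ∀ u, ¬ TStep R n s u) : FilledIn n s.1 := by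
  intro v c hv hc hrest
  by_contra hcs
  obtain ⟨γ, hγ⟩ := hR.exists_update s.2 hc
  exact hmax (insert c s.1, update s.2 c γ)
    ⟨v, hv, c, hc, hcs, hrest, rfl, fun p hp => update_of_ne hp _ _, hγ⟩

lemma run_fst_subset (h : ReflTransGen (TStep R n) s t) : s.1 ⊆ t.1 := by
  induction h with
  | refl => rfl
  | tail _ hstep ih =>
    obtain ⟨-, -, c, -, -, -, ht, -⟩ := hstep
    exact ht ▸ ih.trans (Set.subset_insert c _)

lemma run_snd_eqOn (h : ReflTransGen (TStep R n) s t) : EqOn t.2 s.2 s.1 := by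
  induction h with
  | refl => exact eqOn_refl _ _
  | tail hrun hstep ih =>
    obtain ⟨-, -, c, -, hc, -, -, ht, -⟩ := hstep
    intro p hp
    rw [ht p (ne_of_mem_of_not_mem (run_fst_subset hrun hp) hc), ih hp]

lemma run_fst_subset_of_filledIn {F : Set Pt} (hF : FilledIn n F)
    (h : ReflTransGen (TStep R n) s t) (hs : s.1 ⊆ F) : t.1 ⊆ F := by
  induction h with
  | refl => exact hs
  | tail _ hstep ih =>
    obtain ⟨v, hv, c, hcT, -, hrest, ht, -⟩ := hstep
    exact ht ▸ Set.insert_subset (hF hv hcT (hrest.trans ih)) ih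

lemma run_eqOn_of_validOn (hR : IsTEP R) {x : Pt → A} (hx : ValidOn R n x)
    (h : ReflTransGen (TStep R n) s t) (hs : EqOn s.2 x s.1) : EqOn t.2 x t.1 := by
  induction h with
  | refl => exact hs
  | tail hrun hstep ih =>
    obtain ⟨v, hv, c, hcT, hc, hrest, ht₁, ht₂, hloc⟩ := hstep
    rw [ht₁]
    rintro p (rfl | hp)
    · refine hR.apply_eq_of_eqOn hloc (hx v hv) hcT fun q hq => ?_
      rw [ht₂ q hq.2, ih (hrest hq)]
    · rw [ht₂ p (ne_of_mem_of_not_mem hp hc), ih hp]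

end Completion

lemma ValidOn.congr {x y : Pt → A} (hx : ValidOn R n x) (h : EqOn y x (triangle n)) :
    ValidOn R n y := by
  intro v hv
  have hmem : ∀ p ∈ transl v Tshape, y p = x p := fun p hp => h (hv hp)
  simp only [transl_Tshape, Set.mem_insert_iff, Set.mem_singleton_iff, forall_eq_or_imp,
    forall_eq] at hmem
  rw [hmem.1, hmem.2.1, hmem.2.2]
  exact hx v hv

namespace IsBasis

variable {P : Finset Pt}

lemma exists_validOn_eqOn (hB : IsBasis R n P) (q : Pt → A) :
    ∃ x, ValidOn R n x ∧ EqOn x q P := by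
  obtain ⟨t, hrun, hmax⟩ := exists_maximal_run R n ((P : Set Pt), q)
  exact ⟨t.2, (hB.2 q t hrun hmax).2, run_snd_eqOn hrun⟩

lemma exists_validOn_extending [Nonempty A] (hB : IsBasis R n P) (f : ↥P → A) :
    ∃ x, ValidOn R n x ∧ ∀ p : ↥P, x p = f p := by
  obtain ⟨x, hx, hxf⟩ :=
    hB.exists_validOn_eqOn (extend Subtype.val f fun _ => Classical.arbitrary A)
  exact ⟨x, hx, fun p => (hxf p.2).trans (Subtype.val_injective.extend_apply _ _ p)⟩

lemma eqOn_triangle (hR : IsTEP R) (hB : IsBasis R n P) {x y : Pt → A}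
    (hx : ValidOn R n x) (hy : ValidOn R n y) (h : EqOn x y P) : EqOn x y (triangle n) := by
  obtain ⟨t, hrun, hmax⟩ := exists_maximal_run R n ((P : Set Pt), x)
  have hcov := (hB.2 x t hrun hmax).1
  have htx := run_eqOn_of_validOn hR hx hrun (eqOn_refl _ _)
  have hty := run_eqOn_of_validOn hR hy hrun h
  exact (htx.symm.trans hty).mono hcov

lemma spans [Nonempty A] (hB : IsBasis R n P) : Spans n P := by
  intro F hF hPF
  obtain ⟨t, hrun, hmax⟩ :=
    exists_maximal_run R n ((P : Set Pt), fun _ => Classical.arbitrary A)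
  exact (hB.2 _ t hrun hmax).1.trans (run_fst_subset_of_filledIn hF hrun hPF)

end IsBasis

lemma isBasis_of_spans (hR : IsTEP R) {Q : Finset Pt} (hQ : (Q : Set Pt) ⊆ triangle n)
    (hspan : Spans n Q) (hext : ∀ q : Pt → A, ∃ x, ValidOn R n x ∧ EqOn x q Q) :
    IsBasis R n Q := by
  refine ⟨hQ, fun q s hrun hmax => ?_⟩
  have hcov : triangle n ⊆ s.1 := hspan _ (filledIn_of_maximal hR hmax) (run_fst_subset hrun)
  obtain ⟨x, hx, hxq⟩ := hext q
  have hsx : EqOn s.2 x s.1 := run_eqOn_of_validOn hR hx hrun hxq.symm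
  exact ⟨hcov, hx.congr (hsx.mono hcov)⟩

lemma Move.exists_exchange {P Q : Finset Pt} (h : Move P Q) :
    ∃ v α β, α ∈ transl v Tshape ∧ β ∈ transl v Tshape ∧ α ≠ β ∧
      transl v Tshape \ {β} ⊆ P ∧ (Q : Set Pt) = insert β ((P : Set Pt) \ {α}) := by
  obtain ⟨v, x, y, hx, hy, hxy, -, hyP, hcard, hQ⟩ := h
  have hyτ : v + y ∈ transl v Tshape := Set.mem_image_of_mem _ hy
  have hPτ : (P : Set Pt) ∩ transl v Tshape = transl v Tshape \ {v + y} := by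
    refine Set.eq_of_subset_of_ncard_le
      (fun p hp => ⟨hp.2, fun hpy => hyP (Set.mem_singleton_iff.1 hpy ▸ hp.1)⟩) ?_
      (by rw [transl_Tshape]; exact Set.toFinite _)
    rw [hcard, Set.ncard_sdiff_singleton_of_mem hyτ, ncard_transl_Tshape]
  exact ⟨v, v + x, v + y, Set.mem_image_of_mem _ hx, hyτ, (add_right_injective v).ne hxy,
    hPτ ▸ Set.inter_subset_left, hQ⟩

lemma IsBasis.of_exchange [Nonempty A] (hR : IsTEP R) {P Q : Finset Pt} (hB : IsBasis R n P)
    (hQ : (Q : Set Pt) ⊆ triangle n) {v α β : Pt} (hα : α ∈ transl v Tshape)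
    (hβ : β ∈ transl v Tshape) (hαβ : α ≠ β) (hτP : transl v Tshape \ {β} ⊆ P)
    (hQeq : (Q : Set Pt) = insert β ((P : Set Pt) \ {α})) : IsBasis R n Q := by
  have hβQ : β ∈ (Q : Set Pt) := hQeq ▸ Set.mem_insert β _
  have hPQ : (P : Set Pt) \ {α} ⊆ Q := hQeq ▸ Set.subset_insert β _
  have hτQ : transl v Tshape \ {α} ⊆ Q := by
    rintro p ⟨hpτ, hpα⟩
    by_cases hpβ : p = β
    · exact hpβ ▸ hβQ
    · exact hPQ ⟨hτP ⟨hpτ, hpβ⟩, hpα⟩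
  have hτ : transl v Tshape ⊆ triangle n := by
    intro p hp
    by_cases hpβ : p = β
    · exact hQ (hpβ ▸ hβQ)
    · exact hB.1 (hτP ⟨hp, hpβ⟩)
  refine isBasis_of_spans hR hQ (fun F hF hQF => hB.spans F hF fun p hp => ?_) fun g => ?_
  · by_cases hpα : p = α
    · exact hpα ▸ hF hτ hα (hτQ.trans hQF)
    · exact hQF (hPQ ⟨hp, hpα⟩)
  · obtain ⟨γ, hγ⟩ := hR.exists_update g hα
    obtain ⟨x, hx, hxP⟩ := hB.exists_validOn_eqOn (update g α γ)
    refine ⟨x, hx, hQeq ▸ ?_⟩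
    rintro p (rfl | ⟨hpP, hpα⟩)
    · calc x p = update g α γ p := hR.apply_eq_of_eqOn (hx v hτ) hγ hβ (hxP.mono hτP)
        _ = g p := update_of_ne hαβ.symm _ _
    · exact (hxP hpP).trans (update_of_ne hpα _ _)

lemma exists_equiv_of_isBasis [Nonempty A] (hR : IsTEP R) {P Q : Finset Pt}
    (hP : IsBasis R n P) (hQ : IsBasis R n Q) :
    ∃ e : (↥P → A) ≃ (↥Q → A), ∀ (f : ↥P → A) (x : Pt → A), ValidOn R n x →
      ((∀ p : ↥P, x p = f p) ↔ (∀ q : ↥Q, x q = e f q)) := by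
  choose cP hcP_valid hcP_eq using hP.exists_validOn_extending
  choose cQ hcQ_valid hcQ_eq using hQ.exists_validOn_extending
  have transfer : ∀ {S S' : Finset Pt}, IsBasis R n S → IsBasis R n S' → ∀ {x y : Pt → A},
      ValidOn R n x → ValidOn R n y → EqOn x y S → EqOn x y S' :=
    fun hS hS' _ _ hx hy h => (hS.eqOn_triangle hR hx hy h).mono hS'.1
  refine ⟨⟨fun f q => cP f q, fun g p => cQ g p, fun f => funext fun p => ?_,
    fun g => funext fun q => ?_⟩, fun f x hx => ⟨fun h q => ?_, fun h p => ?_⟩⟩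
  · exact (transfer hQ hP (hcQ_valid _) (hcP_valid f) (fun q hq => hcQ_eq _ ⟨q, hq⟩) p.2).trans
      (hcP_eq f p)
  · exact (transfer hP hQ (hcP_valid _) (hcQ_valid g) (fun p hp => hcP_eq _ ⟨p, hp⟩) q.2).trans
      (hcQ_eq g q)
  · exact transfer hP hQ hx (hcP_valid f) (fun p hp => (h ⟨p, hp⟩).trans (hcP_eq f _).symm) q.2
  · exact (transfer hQ hP hx (hcP_valid f) (fun q hq => h ⟨q, hq⟩) p.2).trans (hcP_eq f p)

end

theorem basis_preserved_by_move_general {A : Type}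
    (R : Set (A × A × A)) (hR : IsTEP R) (n : ℕ) (P Q : Finset Pt)
    (hQ : (Q : Set Pt) ⊆ triangle n)
    (hmv : Move P Q) (hB : IsBasis R n P) :
    IsBasis R n Q ∧
    ∃ e : (↥P → A) ≃ (↥Q → A),
      ∀ (f : ↥P → A) (x : Pt → A), ValidOn R n x →
        ((∀ p : ↥P, x ↑p = f p) ↔ (∀ p : ↥Q, x ↑p = e f p)) := by
  obtain ⟨v, α, β, hα, hβ, hαβ, hτP, hQeq⟩ := hmv.exists_exchange
  rcases isEmpty_or_nonempty A with hA | hA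
  · have : IsEmpty (↥P → A) := isEmpty_fun.2 ⟨⟨α, hτP ⟨hα, hαβ⟩⟩, hA⟩
    have : IsEmpty (↥Q → A) :=
      isEmpty_fun.2 ⟨⟨β, Finset.mem_coe.1 (hQeq ▸ Set.mem_insert β _)⟩, hA⟩
    exact ⟨⟨hQ, fun q => isEmptyElim (q 0)⟩, Equiv.equivOfIsEmpty _ _, fun f => isEmptyElim f⟩
  · have hBQ := hB.of_exchange hR hQ hα hβ hαβ hτP hQeq
    exact ⟨hBQ, exists_equiv_of_isBasis hR hB hBQ⟩

/-- being a basis is preserved by solitaire moves, and the move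
induces a bijection between colourings with the same valid completions. -/
theorem basis_preserved_by_move {A : Type} [Fintype A]
    (R : Set (A × A × A)) (hR : IsTEP R) (n : ℕ) (P Q : Finset Pt)
    (hP : (P : Set Pt) ⊆ triangle n) (hQ : (Q : Set Pt) ⊆ triangle n)
    (hmv : Move P Q) (hB : IsBasis R n P) :
    IsBasis R n Q ∧
    ∃ e : (↥P → A) ≃ (↥Q → A),
      ∀ (f : ↥P → A) (x : Pt → A), ValidOn R n x →
        ((∀ p : ↥P, x ↑p = f p) ↔ (∀ p : ↥Q, x ↑p = e f p)) :=
  basis_preserved_by_move_general R hR n P Q hQ hmv hB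
end
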